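/- arXiv:2103.01734 — 8 statements merged into one kernel-verified Lean document; each statement's English description precedes it below -/
import Mathlib

section
/- Subformula property for IEL⁻: in every normal IEL⁻-deduction of a formula A from a set of assumptions Γ, every formula occurring in the deduction is a subformula of A or a subformula of some formula in Γ. -/
namespace IEL

/-- Formulas of intuitionistic epistemic logic: atoms, `⊥`, `⊤`, `∧`, `∨`, `→`, `□`. -/
inductive Formula : Type where
  | atom : ℕ → Formula
  | bot : Formula
  | top : Formula
  | and : Formula → Formula → Formula
  | or : Formula → Formula → Formula
  | imp : Formula → Formula → Formula
  | box : Formula → Formula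

/-- `IEL⁻`-deduction trees: derivations of a formula from a set of open assumptions,
with the rules of the propositional fragment of `NJ` plus the `□`-introduction rule
(which discharges the hypotheses `A₁, …, Aₙ` of its last premise). -/
inductive Deriv : Set Formula → Formula → Type where
  | hyp {Γ A} : A ∈ Γ → Deriv Γ A
  | topI {Γ} : Deriv Γ .top
  | botE {Γ A} : Deriv Γ .bot → Deriv Γ A
  | andI {Γ A B} : Deriv Γ A → Deriv Γ B → Deriv Γ (.and A B)
  | andE1 {Γ A B} : Deriv Γ (.and A B) → Deriv Γ A
  | andE2 {Γ A B} : Deriv Γ (.and A B) → Deriv Γ B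
  | orI1 {Γ A B} : Deriv Γ A → Deriv Γ (.or A B)
  | orI2 {Γ A B} : Deriv Γ B → Deriv Γ (.or A B)
  | orE {Γ A B C} : Deriv Γ (.or A B) →
      Deriv (insert A Γ) C → Deriv (insert B Γ) C → Deriv Γ C
  | impI {Γ A B} : Deriv (insert A Γ) B → Deriv Γ (.imp A B)
  | impE {Γ A B} : Deriv Γ (.imp A B) → Deriv Γ A → Deriv Γ B
  | boxI {Γ B} (n : ℕ) (As : Fin n → Formula)
      (ds : ∀ i, Deriv Γ (.box (As i)))
      (d : Deriv (Γ ∪ Set.range As) B) : Deriv Γ (.box B)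

/-- The last rule of the deduction is the hypothesis rule. -/
def Deriv.isHyp : {Γ : Set Formula} → {A : Formula} → Deriv Γ A → Prop
  | _, _, .hyp _ => True
  | _, _, _ => False

/-- The last rule is `⊤`-introduction. -/
def Deriv.isTopI : {Γ : Set Formula} → {A : Formula} → Deriv Γ A → Prop
  | _, _, .topI => True
  | _, _, _ => False

/-- The last rule is `⊥`-elimination (ex falso). -/
def Deriv.isBotE : {Γ : Set Formula} → {A : Formula} → Deriv Γ A → Prop
  | _, _, .botE _ => True
  | _, _, _ => False

/-- The last rule is `∧`-introduction. -/
def Deriv.isAndI : {Γ : Set Formula} → {A : Formula} → Deriv Γ A → Prop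
  | _, _, .andI _ _ => True
  | _, _, _ => False

/-- The last rule is left `∨`-introduction. -/
def Deriv.isOrI1 : {Γ : Set Formula} → {A : Formula} → Deriv Γ A → Prop
  | _, _, .orI1 _ => True
  | _, _, _ => False

/-- The last rule is right `∨`-introduction. -/
def Deriv.isOrI2 : {Γ : Set Formula} → {A : Formula} → Deriv Γ A → Prop
  | _, _, .orI2 _ => True
  | _, _, _ => False

/-- The last rule is `∨`-elimination. -/
def Deriv.isOrE : {Γ : Set Formula} → {A : Formula} → Deriv Γ A → Prop
  | _, _, .orE _ _ _ => True
  | _, _, _ => False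

/-- The last rule is `→`-introduction. -/
def Deriv.isImpI : {Γ : Set Formula} → {A : Formula} → Deriv Γ A → Prop
  | _, _, .impI _ => True
  | _, _, _ => False

/-- The last rule is `□`-introduction. -/
def Deriv.isBoxI : {Γ : Set Formula} → {A : Formula} → Deriv Γ A → Prop
  | _, _, .boxI _ _ _ _ => True
  | _, _, _ => False

/-- A detour-, permutation-, or `⊥`-conversion applies at the root of the deduction:
an elimination whose major premise ends with the corresponding introduction (detours,
including the box/box detour and `B_x t in x > t`), or whose major premise ends with
`∨`-elimination (permutations, including the one under `□`-introduction and under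
`⊥`-elimination), or whose major premise ends with `⊥`-elimination (`⊥`-conversions,
including `E(E(t)) > E(t)` and the one for `□`-introduction). -/
def Deriv.isRedexAt : {Γ : Set Formula} → {A : Formula} → Deriv Γ A → Prop
  | _, _, .impE d _ => d.isImpI ∨ d.isOrE ∨ d.isBotE
  | _, _, .andE1 d => d.isAndI ∨ d.isOrE ∨ d.isBotE
  | _, _, .andE2 d => d.isAndI ∨ d.isOrE ∨ d.isBotE
  | _, _, .orE d _ _ => d.isOrI1 ∨ d.isOrI2 ∨ d.isOrE ∨ d.isBotE
  | _, _, .botE d => d.isOrE ∨ d.isBotE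
  | _, _, .boxI (B := B) n As ds d =>
      (∃ i, (ds i).isBoxI ∨ (ds i).isOrE ∨ (ds i).isBotE) ∨
      (n = 1 ∧ d.isHyp ∧ ∃ i, B = As i)
  | _, _, _ => False

/-- Some conversion applies somewhere in the deduction. -/
def Deriv.hasRedex : {Γ : Set Formula} → {A : Formula} → Deriv Γ A → Prop
  | _, _, .hyp _ => False
  | _, _, .topI => False
  | _, _, .botE (A := A) d => Deriv.isRedexAt (Deriv.botE (A := A) d) ∨ d.hasRedex
  | _, _, .andI d e => d.hasRedex ∨ e.hasRedex
  | _, _, .andE1 d => Deriv.isRedexAt (.andE1 d) ∨ d.hasRedex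
  | _, _, .andE2 d => Deriv.isRedexAt (.andE2 d) ∨ d.hasRedex
  | _, _, .orI1 d => d.hasRedex
  | _, _, .orI2 d => d.hasRedex
  | _, _, .orE d e₁ e₂ =>
      Deriv.isRedexAt (.orE d e₁ e₂) ∨ d.hasRedex ∨ e₁.hasRedex ∨ e₂.hasRedex
  | _, _, .impI d => d.hasRedex
  | _, _, .impE d e => Deriv.isRedexAt (.impE d e) ∨ d.hasRedex ∨ e.hasRedex
  | _, _, .boxI n As ds d =>
      Deriv.isRedexAt (.boxI n As ds d) ∨ (∃ i, (ds i).hasRedex) ∨ d.hasRedex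

/-- A deduction is normal when no detour-, permutation-, or `⊥`-conversion applies
anywhere in it. -/
def Deriv.Normal {Γ : Set Formula} {A : Formula} (d : Deriv Γ A) : Prop := ¬ d.hasRedex

/-- The subformula relation: the reflexive-transitive closure of the immediate
subformula relation. -/
inductive Subformula : Formula → Formula → Prop where
  | refl {A} : Subformula A A
  | andL {C A B} : Subformula C A → Subformula C (.and A B)
  | andR {C A B} : Subformula C B → Subformula C (.and A B)
  | orL {C A B} : Subformula C A → Subformula C (.or A B)
  | orR {C A B} : Subformula C B → Subformula C (.or A B)
  | impL {C A B} : Subformula C A → Subformula C (.imp A B)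
  | impR {C A B} : Subformula C B → Subformula C (.imp A B)
  | box {C A} : Subformula C A → Subformula C (.box A)

/-- `d.occurs C`: the formula `C` occurs in the deduction `d`
(i.e. `C` is the conclusion of some subdeduction of `d`, where leaves are assumption
occurrences of the assumed formula). -/
def Deriv.occurs : {Γ : Set Formula} → {A : Formula} → Deriv Γ A → Formula → Prop
  | _, A, .hyp _, C => C = A
  | _, _, .topI, C => C = .top
  | _, A, .botE d, C => C = A ∨ d.occurs C
  | _, _, .andI (A := A) (B := B) d e, C => C = Formula.and A B ∨ d.occurs C ∨ e.occurs C
  | _, A, .andE1 d, C => C = A ∨ d.occurs C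
  | _, A, .andE2 d, C => C = A ∨ d.occurs C
  | _, _, .orI1 (A := A) (B := B) d, C => C = Formula.or A B ∨ d.occurs C
  | _, _, .orI2 (A := A) (B := B) d, C => C = Formula.or A B ∨ d.occurs C
  | _, A, .orE d e₁ e₂, C => C = A ∨ d.occurs C ∨ e₁.occurs C ∨ e₂.occurs C
  | _, _, .impI (A := A) (B := B) d, C => C = Formula.imp A B ∨ d.occurs C
  | _, A, .impE d e, C => C = A ∨ d.occurs C ∨ e.occurs C
  | _, _, .boxI (B := B) _ _ ds d, C => C = Formula.box B ∨ (∃ i, (ds i).occurs C) ∨ d.occurs C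

/-- A "neutral" last rule: hypothesis or an elimination whose conclusion is a
subformula of its major premise. -/
def Deriv.neutral : {Γ : Set Formula} → {A : Formula} → Deriv Γ A → Prop
  | _, _, .hyp _ => True
  | _, _, .andE1 _ => True
  | _, _, .andE2 _ => True
  | _, _, .impE _ _ => True
  | _, _, _ => False

theorem Subformula.trans {A B C : Formula} (h1 : Subformula A B) (h2 : Subformula B C) :
    Subformula A C := by
  induction h2 with
  | refl => exact h1
  | andL _ ih => exact .andL ih
  | andR _ ih => exact .andR ih
  | orL _ ih => exact .orL ih
  | orR _ ih => exact .orR ih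
  | impL _ ih => exact .impL ih
  | impR _ ih => exact .impR ih
  | box _ ih => exact .box ih

lemma sub_bot {C : Formula} (h : Subformula C .bot) : C = .bot := by cases h; rfl

lemma neutral_of_and {Γ : Set Formula} {A B : Formula} :
    ∀ (d : Deriv Γ (.and A B)), ¬(d.isAndI ∨ d.isOrE ∨ d.isBotE) → d.neutral
  | .hyp _, _ => trivial
  | .andE1 _, _ => trivial
  | .andE2 _, _ => trivial
  | .impE _ _, _ => trivial
  | .andI _ _, h => absurd (Or.inl trivial) h
  | .orE _ _ _, h => absurd (Or.inr (Or.inl trivial)) h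
  | .botE _, h => absurd (Or.inr (Or.inr trivial)) h

lemma neutral_of_imp {Γ : Set Formula} {A B : Formula} :
    ∀ (d : Deriv Γ (.imp A B)), ¬(d.isImpI ∨ d.isOrE ∨ d.isBotE) → d.neutral
  | .hyp _, _ => trivial
  | .andE1 _, _ => trivial
  | .andE2 _, _ => trivial
  | .impE _ _, _ => trivial
  | .impI _, h => absurd (Or.inl trivial) h
  | .orE _ _ _, h => absurd (Or.inr (Or.inl trivial)) h
  | .botE _, h => absurd (Or.inr (Or.inr trivial)) h

lemma neutral_of_or {Γ : Set Formula} {A B : Formula} :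
    ∀ (d : Deriv Γ (.or A B)), ¬(d.isOrI1 ∨ d.isOrI2 ∨ d.isOrE ∨ d.isBotE) → d.neutral
  | .hyp _, _ => trivial
  | .andE1 _, _ => trivial
  | .andE2 _, _ => trivial
  | .impE _ _, _ => trivial
  | .orI1 _, h => absurd (Or.inl trivial) h
  | .orI2 _, h => absurd (Or.inr (Or.inl trivial)) h
  | .orE _ _ _, h => absurd (Or.inr (Or.inr (Or.inl trivial))) h
  | .botE _, h => absurd (Or.inr (Or.inr (Or.inr trivial))) h

lemma neutral_of_bot {Γ : Set Formula} :
    ∀ (d : Deriv Γ .bot), ¬(d.isOrE ∨ d.isBotE) → d.neutral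
  | .hyp _, _ => trivial
  | .andE1 _, _ => trivial
  | .andE2 _, _ => trivial
  | .impE _ _, _ => trivial
  | .orE _ _ _, h => absurd (Or.inl trivial) h
  | .botE _, h => absurd (Or.inr trivial) h

lemma neutral_of_box {Γ : Set Formula} {A : Formula} :
    ∀ (d : Deriv Γ (.box A)), ¬(d.isBoxI ∨ d.isOrE ∨ d.isBotE) → d.neutral
  | .hyp _, _ => trivial
  | .andE1 _, _ => trivial
  | .andE2 _, _ => trivial
  | .impE _ _, _ => trivial
  | .boxI _ _ _ _, h => absurd (Or.inl trivial) h
  | .orE _ _ _, h => absurd (Or.inr (Or.inl trivial)) h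
  | .botE _, h => absurd (Or.inr (Or.inr trivial)) h

theorem main_subformula {Γ : Set Formula} {A : Formula} (d : Deriv Γ A) :
    d.Normal →
      (∀ C : Formula, d.occurs C → Subformula C A ∨ ∃ B ∈ Γ, Subformula C B) ∧
      (d.neutral → ∃ B ∈ Γ, Subformula A B) := by
  induction d with
  | @hyp Γ A h =>
    intro _
    refine ⟨fun C hC => ?_, fun _ => ⟨A, h, .refl⟩⟩
    cases hC
    exact Or.inr ⟨A, h, .refl⟩
  | topI =>
    intro _
    refine ⟨fun C hC => ?_, fun h => h.elim⟩
    cases hC; exact Or.inl .refl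
  | @botE Γ A d ih =>
    intro hn
    have hnr : ¬ Deriv.isRedexAt (Deriv.botE (A := A) d) ∧ d.Normal := by
      constructor <;> intro h <;> exact hn (by first | exact Or.inl h | exact Or.inr h)
    obtain ⟨ihocc, ihneu⟩ := ih hnr.2
    have hb : ∃ B ∈ Γ, Subformula Formula.bot B := ihneu (neutral_of_bot d hnr.1)
    refine ⟨fun C hC => ?_, fun h => h.elim⟩
    rcases hC with rfl | hC
    · exact Or.inl .refl
    · rcases ihocc C hC with hs | hΓ
      · obtain ⟨B, hB, hBsub⟩ := hb
        exact Or.inr ⟨B, hB, (sub_bot hs) ▸ hBsub⟩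
      · exact Or.inr hΓ
  | @andI Γ A B d e ihd ihe =>
    intro hn
    have hd : d.Normal := fun h => hn (Or.inl h)
    have he : e.Normal := fun h => hn (Or.inr h)
    refine ⟨fun C hC => ?_, fun h => h.elim⟩
    rcases hC with rfl | hC | hC
    · exact Or.inl .refl
    · rcases (ihd hd).1 C hC with hs | hΓ
      · exact Or.inl (.andL hs)
      · exact Or.inr hΓ
    · rcases (ihe he).1 C hC with hs | hΓ
      · exact Or.inl (.andR hs)
      · exact Or.inr hΓ
  | @andE1 Γ A B d ih =>
    intro hn
    have hnr : ¬ Deriv.isRedexAt (.andE1 d) ∧ d.Normal := by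
      constructor <;> intro h <;> exact hn (by first | exact Or.inl h | exact Or.inr h)
    obtain ⟨ihocc, ihneu⟩ := ih hnr.2
    obtain ⟨B', hB', hsub⟩ := ihneu (neutral_of_and d hnr.1)
    have hA : Subformula A B' := (Subformula.andL .refl).trans hsub
    refine ⟨fun C hC => ?_, fun _ => ⟨B', hB', hA⟩⟩
    rcases hC with rfl | hC
    · exact Or.inr ⟨B', hB', hA⟩
    · rcases ihocc C hC with hs | hΓ
      · exact Or.inr ⟨B', hB', hs.trans hsub⟩
      · exact Or.inr hΓ
  | @andE2 Γ A B d ih =>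
    intro hn
    have hnr : ¬ Deriv.isRedexAt (.andE2 d) ∧ d.Normal := by
      constructor <;> intro h <;> exact hn (by first | exact Or.inl h | exact Or.inr h)
    obtain ⟨ihocc, ihneu⟩ := ih hnr.2
    obtain ⟨B', hB', hsub⟩ := ihneu (neutral_of_and d hnr.1)
    have hA : Subformula B B' := (Subformula.andR .refl).trans hsub
    refine ⟨fun C hC => ?_, fun _ => ⟨B', hB', hA⟩⟩
    rcases hC with rfl | hC
    · exact Or.inr ⟨B', hB', hA⟩
    · rcases ihocc C hC with hs | hΓ
      · exact Or.inr ⟨B', hB', hs.trans hsub⟩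
      · exact Or.inr hΓ
  | @orI1 Γ A B d ih =>
    intro hn
    refine ⟨fun C hC => ?_, fun h => h.elim⟩
    rcases hC with rfl | hC
    · exact Or.inl .refl
    · rcases (ih hn).1 C hC with hs | hΓ
      · exact Or.inl (.orL hs)
      · exact Or.inr hΓ
  | @orI2 Γ A B d ih =>
    intro hn
    refine ⟨fun C hC => ?_, fun h => h.elim⟩
    rcases hC with rfl | hC
    · exact Or.inl .refl
    · rcases (ih hn).1 C hC with hs | hΓ
      · exact Or.inl (.orR hs)
      · exact Or.inr hΓ
  | @orE Γ A B C₀ d e₁ e₂ ihd ih₁ ih₂ =>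
    intro hn
    have hnr : ¬ Deriv.isRedexAt (.orE d e₁ e₂) := fun h => hn (Or.inl h)
    have hd : d.Normal := fun h => hn (Or.inr (Or.inl h))
    have h1 : e₁.Normal := fun h => hn (Or.inr (Or.inr (Or.inl h)))
    have h2 : e₂.Normal := fun h => hn (Or.inr (Or.inr (Or.inr h)))
    obtain ⟨ihocc, ihneu⟩ := ihd hd
    obtain ⟨B', hB', hsub⟩ := ihneu (neutral_of_or d hnr)
    refine ⟨fun C hC => ?_, fun h => h.elim⟩
    rcases hC with rfl | hC | hC | hC
    · exact Or.inl .refl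
    · rcases ihocc C hC with hs | hΓ
      · exact Or.inr ⟨B', hB', hs.trans hsub⟩
      · exact Or.inr hΓ
    · rcases (ih₁ h1).1 C hC with hs | ⟨B'', hB'', hs⟩
      · exact Or.inl hs
      · rcases hB'' with rfl | hB''
        · exact Or.inr ⟨B', hB', (hs.trans (Subformula.orL .refl)).trans hsub⟩
        · exact Or.inr ⟨B'', hB'', hs⟩
    · rcases (ih₂ h2).1 C hC with hs | ⟨B'', hB'', hs⟩
      · exact Or.inl hs
      · rcases hB'' with rfl | hB''
        · exact Or.inr ⟨B', hB', (hs.trans (Subformula.orR .refl)).trans hsub⟩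
        · exact Or.inr ⟨B'', hB'', hs⟩
  | @impI Γ A B d ih =>
    intro hn
    refine ⟨fun C hC => ?_, fun h => h.elim⟩
    rcases hC with rfl | hC
    · exact Or.inl .refl
    · rcases (ih hn).1 C hC with hs | ⟨B'', hB'', hs⟩
      · exact Or.inl (.impR hs)
      · rcases hB'' with rfl | hB''
        · exact Or.inl (.impL hs)
        · exact Or.inr ⟨B'', hB'', hs⟩
  | @impE Γ A B d e ihd ihe =>
    intro hn
    have hnr : ¬ Deriv.isRedexAt (.impE d e) := fun h => hn (Or.inl h)
    have hd : d.Normal := fun h => hn (Or.inr (Or.inl h))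
    have he : e.Normal := fun h => hn (Or.inr (Or.inr h))
    obtain ⟨ihocc, ihneu⟩ := ihd hd
    obtain ⟨B', hB', hsub⟩ := ihneu (neutral_of_imp d hnr)
    have hB : Subformula B B' := (Subformula.impR .refl).trans hsub
    refine ⟨fun C hC => ?_, fun _ => ⟨B', hB', hB⟩⟩
    rcases hC with rfl | hC | hC
    · exact Or.inr ⟨B', hB', hB⟩
    · rcases ihocc C hC with hs | hΓ
      · exact Or.inr ⟨B', hB', hs.trans hsub⟩
      · exact Or.inr hΓ
    · rcases (ihe he).1 C hC with hs | hΓ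
      · exact Or.inr ⟨B', hB', (hs.trans (Subformula.impL .refl)).trans hsub⟩
      · exact Or.inr hΓ
  | @boxI Γ B₀ n As ds d ihds ihd =>
    intro hn
    have hnr : ¬ Deriv.isRedexAt (.boxI n As ds d) := fun h => hn (Or.inl h)
    have hds : ∀ i, (ds i).Normal := fun i h => hn (Or.inr (Or.inl ⟨i, h⟩))
    have hd : d.Normal := fun h => hn (Or.inr (Or.inr h))
    have hnri : ∀ i, ¬((ds i).isBoxI ∨ (ds i).isOrE ∨ (ds i).isBotE) :=
      fun i h => hnr (Or.inl ⟨i, h⟩)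
    have hsubs : ∀ i, ∃ B ∈ Γ, Subformula (Formula.box (As i)) B := fun i =>
      ((ihds i (hds i)).2 (neutral_of_box (ds i) (hnri i)))
    refine ⟨fun C hC => ?_, fun h => h.elim⟩
    rcases hC with rfl | ⟨i, hC⟩ | hC
    · exact Or.inl .refl
    · obtain ⟨B', hB', hsub⟩ := hsubs i
      rcases (ihds i (hds i)).1 C hC with hs | hΓ
      · exact Or.inr ⟨B', hB', hs.trans hsub⟩
      · exact Or.inr hΓ
    · rcases (ihd hd).1 C hC with hs | ⟨B'', hB'', hs⟩
      · exact Or.inl (.box hs)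
      · rcases hB'' with hB'' | ⟨i, rfl⟩
        · exact Or.inr ⟨B'', hB'', hs⟩
        · obtain ⟨B', hB', hsub⟩ := hsubs i
          exact Or.inr ⟨B', hB', (hs.trans (Subformula.box .refl)).trans hsub⟩

/-- **Subformula property for `IEL⁻`**: every formula occurring in a normal
`IEL⁻`-deduction of `A` from assumptions `Γ` is a subformula of `A` or of some formula
in `Γ`. -/
theorem subformula_property :
    ∀ (Γ : Set Formula) (A : Formula) (d : Deriv Γ A), d.Normal →
      ∀ C : Formula, d.occurs C → Subformula C A ∨ ∃ B ∈ Γ, Subformula C B :=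
  fun _ _ d hn => (main_subformula d hn).1

end IEL
end

section
/- Consistency of IEL⁻: the formula ⊥ is not derivable in 𝕀EL⁻ from the empty set of hypotheses, i.e. not ⊢ ⊥. -/
namespace IEL

/-- The Hilbert system `𝕀EL⁻`: axiom schemes of intuitionistic propositional logic,
the scheme `K`, co-reflection `A → □A`, and modus ponens as the only inference rule. -/
inductive Hilbert : Set Formula → Formula → Prop where
  | hyp {Γ A} : A ∈ Γ → Hilbert Γ A
  | imp1 {Γ A B} : Hilbert Γ (.imp A (.imp B A))
  | imp2 {Γ A B C} :
      Hilbert Γ (.imp (.imp A (.imp B C)) (.imp (.imp A B) (.imp A C)))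
  | andI {Γ A B} : Hilbert Γ (.imp A (.imp B (.and A B)))
  | andE1 {Γ A B} : Hilbert Γ (.imp (.and A B) A)
  | andE2 {Γ A B} : Hilbert Γ (.imp (.and A B) B)
  | orI1 {Γ A B} : Hilbert Γ (.imp A (.or A B))
  | orI2 {Γ A B} : Hilbert Γ (.imp B (.or A B))
  | orE {Γ A B C} :
      Hilbert Γ (.imp (.imp A C) (.imp (.imp B C) (.imp (.or A B) C)))
  | exfalso {Γ A} : Hilbert Γ (.imp .bot A)
  | top {Γ} : Hilbert Γ .top
  | k {Γ A B} : Hilbert Γ (.imp (.box (.imp A B)) (.imp (.box A) (.box B)))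
  | coreflection {Γ A} : Hilbert Γ (.imp A (.box A))
  | mp {Γ A B} : Hilbert Γ (.imp A B) → Hilbert Γ A → Hilbert Γ B

/-- `⊢ A` : derivability in `𝕀EL⁻` from the empty set of hypotheses. -/
def Prov (A : Formula) : Prop := Hilbert ∅ A

/-- Interpret formulas in `Prop`, reading `□A` as `A`. -/
def eval : Formula → Prop
  | .atom _ => True
  | .bot => False
  | .top => True
  | .and A B => eval A ∧ eval B
  | .or A B => eval A ∨ eval B
  | .imp A B => eval A → eval B
  | .box A => eval A

lemma sound {Γ A} (h : Hilbert Γ A) (hΓ : ∀ B ∈ Γ, eval B) : eval A := by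
  induction h with
  | hyp hA => exact hΓ _ hA
  | mp _ _ ih1 ih2 => exact ih1 (ih2)
  | _ => simp only [eval] <;> tauto

/-- **Consistency of `𝕀EL⁻`**: `⊥` is not derivable from the empty set of hypotheses. -/
theorem consistency : ¬ Prov .bot := by
  intro h
  exact sound h (by simp)

end IEL
end

section
/- Canonicity of normal closed IEL⁻-deductions: every normal IEL⁻-deduction of a formula A from the empty set of assumptions ends with the introduction rule for the main connective of A; equivalently, its proof term is in canonical (introduction) form: a λ-abstraction if A is an implication, a pair if A is a conjunction, an injection if A is a disjunction, the unit term if A is ⊤, and a modal term B_{x₁,…,xₙ}(t₁,…,tₙ) in s if A = □B. In particular A is neither ⊥ nor a propositional atom. -/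
namespace IEL

/-- The last rule of the deduction is an introduction rule. -/
def Deriv.endsWithIntro : {Γ : Set Formula} → {A : Formula} → Deriv Γ A → Prop
  | _, _, .topI => True
  | _, _, .andI _ _ => True
  | _, _, .orI1 _ => True
  | _, _, .orI2 _ => True
  | _, _, .impI _ => True
  | _, _, .boxI _ _ _ _ => True
  | _, _, _ => False

theorem canonicity_aux :
    ∀ {Γ : Set Formula} {A : Formula} (d : Deriv Γ A), Γ = ∅ → ¬ d.hasRedex →
      d.endsWithIntro ∧
      (∀ B C, A = .imp B C → d.isImpI) ∧
      (∀ B C, A = .and B C → d.isAndI) ∧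
      (∀ B C, A = .or B C → d.isOrI1 ∨ d.isOrI2) ∧
      (A = .top → d.isTopI) ∧
      (∀ B, A = .box B → d.isBoxI) ∧
      A ≠ .bot ∧ (∀ p, A ≠ .atom p) := by
  intro Γ A d
  induction d with
  | hyp h =>
      intro hΓ _; subst hΓ; exact absurd h (Set.notMem_empty _)
  | topI =>
      intro _ _
      exact ⟨trivial, by rintro _ _ ⟨⟩, by rintro _ _ ⟨⟩, by rintro _ _ ⟨⟩,
        fun _ => trivial, by rintro _ ⟨⟩, by rintro ⟨⟩, by rintro _ ⟨⟩⟩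
  | botE d ih =>
      intro hΓ hd; subst hΓ
      have hn : ¬ d.hasRedex := fun h => hd (Or.inr h)
      exact ((ih rfl hn).2.2.2.2.2.2.1 rfl).elim
  | andI d e ihd ihe =>
      intro _ _
      exact ⟨trivial, by rintro _ _ ⟨⟩, fun _ _ _ => trivial, by rintro _ _ ⟨⟩,
        by rintro ⟨⟩, by rintro _ ⟨⟩, by rintro ⟨⟩, by rintro _ ⟨⟩⟩
  | andE1 d ih =>
      intro hΓ hd; subst hΓ
      have hn : ¬ d.hasRedex := fun h => hd (Or.inr h)
      have h := (ih rfl hn).2.2.1 _ _ rfl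
      exact (hd (Or.inl (Or.inl h))).elim
  | andE2 d ih =>
      intro hΓ hd; subst hΓ
      have hn : ¬ d.hasRedex := fun h => hd (Or.inr h)
      have h := (ih rfl hn).2.2.1 _ _ rfl
      exact (hd (Or.inl (Or.inl h))).elim
  | orI1 d ih =>
      intro _ _
      exact ⟨trivial, by rintro _ _ ⟨⟩, by rintro _ _ ⟨⟩, fun _ _ _ => Or.inl trivial,
        by rintro ⟨⟩, by rintro _ ⟨⟩, by rintro ⟨⟩, by rintro _ ⟨⟩⟩
  | orI2 d ih =>
      intro _ _
      exact ⟨trivial, by rintro _ _ ⟨⟩, by rintro _ _ ⟨⟩, fun _ _ _ => Or.inr trivial,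
        by rintro ⟨⟩, by rintro _ ⟨⟩, by rintro ⟨⟩, by rintro _ ⟨⟩⟩
  | orE d e₁ e₂ ihd ih₁ ih₂ =>
      intro hΓ hd; subst hΓ
      have hn : ¬ d.hasRedex := fun h => hd (Or.inr (Or.inl h))
      have h := (ihd rfl hn).2.2.2.1 _ _ rfl
      rcases h with h | h
      · exact (hd (Or.inl (Or.inl h))).elim
      · exact (hd (Or.inl (Or.inr (Or.inl h)))).elim
  | impI d ih =>
      intro _ _
      exact ⟨trivial, fun _ _ _ => trivial, by rintro _ _ ⟨⟩, by rintro _ _ ⟨⟩,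
        by rintro ⟨⟩, by rintro _ ⟨⟩, by rintro ⟨⟩, by rintro _ ⟨⟩⟩
  | impE d e ihd ihe =>
      intro hΓ hd; subst hΓ
      have hn : ¬ d.hasRedex := fun h => hd (Or.inr (Or.inl h))
      have h := (ihd rfl hn).2.1 _ _ rfl
      exact (hd (Or.inl (Or.inl h))).elim
  | boxI n As ds d ihds ihd =>
      intro _ _
      exact ⟨trivial, by rintro _ _ ⟨⟩, by rintro _ _ ⟨⟩, by rintro _ _ ⟨⟩,
        by rintro ⟨⟩, fun _ _ => trivial, by rintro ⟨⟩, by rintro _ ⟨⟩⟩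

/-- **Canonicity of normal closed `IEL⁻`-deductions**: every normal deduction of `A`
from the empty set of assumptions ends with the introduction rule for the main
connective of `A` (an `→`-introduction if `A` is an implication, an `∧`-introduction if
`A` is a conjunction, an `∨`-introduction if `A` is a disjunction, the `⊤`-introduction
if `A` is `⊤`, and a `□`-introduction if `A` is a `□`-formula); in particular `A` is
neither `⊥` nor a propositional atom. -/
theorem canonicity :
    ∀ (A : Formula) (d : Deriv ∅ A), d.Normal →
      d.endsWithIntro ∧
      (∀ B C, A = .imp B C → d.isImpI) ∧
      (∀ B C, A = .and B C → d.isAndI) ∧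
      (∀ B C, A = .or B C → d.isOrI1 ∨ d.isOrI2) ∧
      (A = .top → d.isTopI) ∧
      (∀ B, A = .box B → d.isBoxI) ∧
      A ≠ .bot ∧ (∀ p, A ≠ .atom p) :=
  fun _ d h => canonicity_aux d rfl h

end IEL
end

section
/- Disjunction property for IEL⁻: for all formulas A and B, if ⊢ A ∨ B in 𝕀EL⁻, then ⊢ A or ⊢ B. -/
namespace IEL

/-- Aczel slash predicate for `𝕀EL⁻`. -/
def Slash : Formula → Prop
  | .atom n => Prov (.atom n)
  | .bot => False
  | .top => True
  | .and A B => Slash A ∧ Slash B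
  | .or A B => Slash A ∨ Slash B
  | .imp A B => Prov (.imp A B) ∧ (Slash A → Slash B)
  | .box A => Prov (.box A)

theorem slash_prov : ∀ A, Slash A → Prov A
  | .atom _, h => h
  | .bot, h => h.elim
  | .top, _ => Hilbert.top
  | .and A B, ⟨hA, hB⟩ => .mp (.mp .andI (slash_prov A hA)) (slash_prov B hB)
  | .or A B, h =>
      h.elim (fun hA => .mp .orI1 (slash_prov A hA))
        (fun hB => .mp .orI2 (slash_prov B hB))
  | .imp _ _, h => h.1
  | .box _, h => h

theorem hilbert_slash : ∀ {Γ A}, Hilbert Γ A → Γ = (∅ : Set Formula) → Slash A := by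
  intro Γ A h
  induction h with
  | hyp hmem =>
      intro hΓ; subst hΓ; exact absurd hmem (Set.notMem_empty _)
  | @imp1 A B =>
      intro hΓ; subst hΓ
      exact ⟨Hilbert.imp1, fun sA =>
        ⟨.mp .imp1 (slash_prov A sA), fun _ => sA⟩⟩
  | @imp2 A B C =>
      intro hΓ; subst hΓ
      refine ⟨Hilbert.imp2, fun s1 => ⟨.mp .imp2 s1.1, fun s2 => ⟨.mp (.mp .imp2 s1.1) s2.1, fun sA => (s1.2 sA).2 (s2.2 sA)⟩⟩⟩
  | @andI A B =>
      intro hΓ; subst hΓ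
      exact ⟨Hilbert.andI, fun sA =>
        ⟨.mp .andI (slash_prov A sA), fun sB => ⟨sA, sB⟩⟩⟩
  | @andE1 A B =>
      intro hΓ; subst hΓ
      exact ⟨Hilbert.andE1, fun s => s.1⟩
  | @andE2 A B =>
      intro hΓ; subst hΓ
      exact ⟨Hilbert.andE2, fun s => s.2⟩
  | @orI1 A B =>
      intro hΓ; subst hΓ
      exact ⟨Hilbert.orI1, Or.inl⟩
  | @orI2 A B =>
      intro hΓ; subst hΓ
      exact ⟨Hilbert.orI2, Or.inr⟩
  | @orE A B C =>
      intro hΓ; subst hΓ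
      refine ⟨Hilbert.orE, fun s1 => ⟨.mp .orE s1.1, fun s2 =>
        ⟨.mp (.mp .orE s1.1) s2.1, fun sAB => sAB.elim s1.2 s2.2⟩⟩⟩
  | @exfalso A =>
      intro hΓ; subst hΓ
      exact ⟨Hilbert.exfalso, False.elim⟩
  | top => intro _; trivial
  | @k A B =>
      intro hΓ; subst hΓ
      exact ⟨Hilbert.k, fun p =>
        ⟨.mp .k p, fun q => .mp (.mp .k p) q⟩⟩
  | @coreflection A =>
      intro hΓ; subst hΓ
      exact ⟨Hilbert.coreflection, fun sA =>
        .mp .coreflection (slash_prov A sA)⟩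
  | mp h1 h2 ih1 ih2 =>
      intro hΓ
      exact (ih1 hΓ).2 (ih2 hΓ)

/-- **Disjunction property for `IEL⁻`**: if `⊢ A ∨ B` then `⊢ A` or `⊢ B`. -/
theorem disjunction_property :
    ∀ A B : Formula, Prov (.or A B) → Prov A ∨ Prov B := by
  intro A B h
  have s : Slash (.or A B) := hilbert_slash h rfl
  exact s.elim (fun hA => Or.inl (slash_prov A hA)) (fun hB => Or.inr (slash_prov B hB))

end IEL
end

section
/- Admissibility of the reflection rule in IEL⁻: for every formula A, if ⊢ □A in 𝕀EL⁻, then ⊢ A. -/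
namespace IEL

/-- Aczel-slash style predicate for `𝕀EL⁻`. -/
def s : Formula → Prop
  | .atom n => Prov (.atom n)
  | .bot => False
  | .top => True
  | .and A B => s A ∧ s B
  | .or A B => s A ∨ s B
  | .imp A B => Prov (.imp A B) ∧ (s A → s B)
  | .box A => s A

lemma s_prov : ∀ A, s A → Prov A
  | .atom _, h => h
  | .bot, h => h.elim
  | .top, _ => Hilbert.top
  | .and A B, ⟨ha, hb⟩ =>
      Hilbert.mp (Hilbert.mp Hilbert.andI (s_prov A ha)) (s_prov B hb)
  | .or A _, Or.inl ha => Hilbert.mp Hilbert.orI1 (s_prov A ha)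
  | .or _ B, Or.inr hb => Hilbert.mp Hilbert.orI2 (s_prov B hb)
  | .imp _ _, h => h.1
  | .box A, h => Hilbert.mp Hilbert.coreflection (s_prov A h)

lemma s_sound : ∀ {Γ A}, Hilbert Γ A → (∀ B ∈ Γ, s B) → s A := by
  intro Γ A h
  induction h with
  | hyp hA => intro hΓ; exact hΓ _ hA
  | imp1 =>
      intro _
      exact ⟨Hilbert.imp1, fun ha =>
        ⟨Hilbert.mp Hilbert.imp1 (s_prov _ ha), fun _ => ha⟩⟩
  | imp2 =>
      intro _
      exact ⟨Hilbert.imp2, fun h1 =>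
        ⟨Hilbert.mp Hilbert.imp2 h1.1, fun h2 =>
          ⟨Hilbert.mp (Hilbert.mp Hilbert.imp2 h1.1) h2.1,
            fun ha => (h1.2 ha).2 (h2.2 ha)⟩⟩⟩
  | andI =>
      intro _
      exact ⟨Hilbert.andI, fun ha =>
        ⟨Hilbert.mp Hilbert.andI (s_prov _ ha), fun hb => ⟨ha, hb⟩⟩⟩
  | andE1 => intro _; exact ⟨Hilbert.andE1, fun h => h.1⟩
  | andE2 => intro _; exact ⟨Hilbert.andE2, fun h => h.2⟩
  | orI1 => intro _; exact ⟨Hilbert.orI1, Or.inl⟩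
  | orI2 => intro _; exact ⟨Hilbert.orI2, Or.inr⟩
  | orE =>
      intro _
      exact ⟨Hilbert.orE, fun h1 =>
        ⟨Hilbert.mp Hilbert.orE h1.1, fun h2 =>
          ⟨Hilbert.mp (Hilbert.mp Hilbert.orE h1.1) h2.1,
            fun hab => hab.elim h1.2 h2.2⟩⟩⟩
  | exfalso => intro _; exact ⟨Hilbert.exfalso, fun h => h.elim⟩
  | top => intro _; trivial
  | k =>
      intro _
      exact ⟨Hilbert.k, fun h1 =>
        ⟨Hilbert.mp Hilbert.k (Hilbert.mp Hilbert.coreflection h1.1), h1.2⟩⟩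
  | coreflection => intro _; exact ⟨Hilbert.coreflection, fun h => h⟩
  | mp _ _ ih1 ih2 => intro hΓ; exact (ih1 hΓ).2 (ih2 hΓ)

/-- **Admissibility of the reflection rule in `IEL⁻`**: if `⊢ □A` then `⊢ A`. -/
theorem reflection_admissible : ∀ A : Formula, Prov (.box A) → Prov A := by
  intro A h
  exact s_prov A (s_sound (A := Formula.box A) h (fun B hB => hB.elim))

end IEL
end

section
/- Equivalence of the natural deduction and Hilbert formulations of intuitionistic belief: for every set of formulas Γ and every formula A, A is derivable from Γ in the natural deduction system IEL⁻ if and only if A is derivable from Γ in the Hilbert system 𝕀EL⁻. -/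
namespace IEL

/-- The natural deduction system `IEL⁻` (derivability): the propositional fragment of
`NJ` extended by the `□`-introduction rule, which from deductions of `□A₁, …, □Aₙ` and a
deduction of `B` from hypotheses `A₁, …, Aₙ` together with the remaining open hypotheses
infers `□B`, discharging `A₁, …, Aₙ`. -/
inductive ND : Set Formula → Formula → Prop where
  | hyp {Γ A} : A ∈ Γ → ND Γ A
  | topI {Γ} : ND Γ .top
  | botE {Γ A} : ND Γ .bot → ND Γ A
  | andI {Γ A B} : ND Γ A → ND Γ B → ND Γ (.and A B)
  | andE1 {Γ A B} : ND Γ (.and A B) → ND Γ A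
  | andE2 {Γ A B} : ND Γ (.and A B) → ND Γ B
  | orI1 {Γ A B} : ND Γ A → ND Γ (.or A B)
  | orI2 {Γ A B} : ND Γ B → ND Γ (.or A B)
  | orE {Γ A B C} : ND Γ (.or A B) →
      ND (insert A Γ) C → ND (insert B Γ) C → ND Γ C
  | impI {Γ A B} : ND (insert A Γ) B → ND Γ (.imp A B)
  | impE {Γ A B} : ND Γ (.imp A B) → ND Γ A → ND Γ B
  | boxI {Γ B} (As : List Formula) :
      (∀ A ∈ As, ND Γ (.box A)) →
      ND (Γ ∪ {A | A ∈ As}) B →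
      ND Γ (.box B)

theorem Hilbert.id {Γ A} : Hilbert Γ (.imp A A) :=
  .mp (.mp .imp2 (.imp1 (B := Formula.imp A A))) .imp1

theorem Hilbert.ded_aux {Δ B} (h : Hilbert Δ B) :
    ∀ {Γ : Set Formula} {A}, Δ = insert A Γ → Hilbert Γ (.imp A B) := by
  induction h with
  | hyp hm =>
    intro Γ A hΔ
    subst hΔ
    rcases hm with rfl | hm
    · exact Hilbert.id
    · exact .mp .imp1 (.hyp hm)
  | mp _ _ ih1 ih2 =>
    intro Γ A hΔ
    exact .mp (.mp .imp2 (ih1 hΔ)) (ih2 hΔ)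
  | _ =>
    intro Γ A hΔ
    exact .mp .imp1 (by first
      | exact .imp1 | exact .imp2 | exact .andI | exact .andE1 | exact .andE2
      | exact .orI1 | exact .orI2 | exact .orE | exact .exfalso | exact .top
      | exact .k | exact .coreflection)

theorem Hilbert.deduction {Γ A B} (h : Hilbert (insert A Γ) B) :
    Hilbert Γ (.imp A B) := h.ded_aux rfl

theorem Hilbert.boxAux {Γ B} : ∀ (As : List Formula),
    (∀ A ∈ As, Hilbert Γ (.box A)) →
    Hilbert (Γ ∪ {A | A ∈ As}) B → Hilbert Γ (.box B)
  | [], _, hB => by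
    have hs : Γ ∪ {A | A ∈ ([] : List Formula)} = Γ := by simp
    rw [hs] at hB
    exact .mp .coreflection hB
  | A :: As, h, hB => by
    have hs : Γ ∪ {x | x ∈ A :: As} = insert A (Γ ∪ {x | x ∈ As}) := by
      ext x; simp [or_left_comm]
    rw [hs] at hB
    have h1 : Hilbert Γ (.box (.imp A B)) :=
      Hilbert.boxAux As (fun A' hA' => h A' (List.mem_cons_of_mem _ hA')) hB.deduction
    exact .mp (.mp .k h1) (h A List.mem_cons_self)

theorem ND.toHilbert {Γ A} (h : ND Γ A) : Hilbert Γ A := by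
  induction h with
  | hyp h => exact .hyp h
  | topI => exact .top
  | botE _ ih => exact .mp .exfalso ih
  | andI _ _ ih1 ih2 => exact .mp (.mp .andI ih1) ih2
  | andE1 _ ih => exact .mp .andE1 ih
  | andE2 _ ih => exact .mp .andE2 ih
  | orI1 _ ih => exact .mp .orI1 ih
  | orI2 _ ih => exact .mp .orI2 ih
  | orE _ _ _ ih ihA ihB => exact .mp (.mp (.mp .orE ihA.deduction) ihB.deduction) ih
  | impI _ ih => exact ih.deduction
  | impE _ _ ih1 ih2 => exact .mp ih1 ih2
  | boxI As _ _ ih1 ih2 => exact Hilbert.boxAux As ih1 ih2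

theorem ND.weaken {Γ Γ' A} (h : ND Γ A) (hs : Γ ⊆ Γ') : ND Γ' A := by
  induction h generalizing Γ' with
  | hyp h => exact .hyp (hs h)
  | topI => exact .topI
  | botE _ ih => exact .botE (ih hs)
  | andI _ _ ih1 ih2 => exact .andI (ih1 hs) (ih2 hs)
  | andE1 _ ih => exact .andE1 (ih hs)
  | andE2 _ ih => exact .andE2 (ih hs)
  | orI1 _ ih => exact .orI1 (ih hs)
  | orI2 _ ih => exact .orI2 (ih hs)
  | orE _ _ _ ih ihA ihB =>
    exact .orE (ih hs) (ihA (Set.insert_subset_insert hs))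
      (ihB (Set.insert_subset_insert hs))
  | impI _ ih => exact .impI (ih (Set.insert_subset_insert hs))
  | impE _ _ ih1 ih2 => exact .impE (ih1 hs) (ih2 hs)
  | boxI As _ _ ih1 ih2 =>
    exact .boxI As (fun A hA => ih1 A hA hs)
      (ih2 (Set.union_subset_union_left _ hs))

theorem Hilbert.toND {Γ A} (h : Hilbert Γ A) : ND Γ A := by
  induction h with
  | hyp h => exact .hyp h
  | top => exact .topI
  | imp1 => exact .impI (.impI (.hyp (by simp)))
  | @imp2 A B C =>
    refine .impI (.impI (.impI ?_))
    have hA : ND (insert A (insert (A.imp B) (insert (A.imp (B.imp C)) Γ))) A :=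
      .hyp (by simp)
    have hAB : ND (insert A (insert (A.imp B) (insert (A.imp (B.imp C)) Γ)))
        (A.imp B) := .hyp (by simp)
    have hABC : ND (insert A (insert (A.imp B) (insert (A.imp (B.imp C)) Γ)))
        (A.imp (B.imp C)) := .hyp (by simp)
    exact .impE (.impE hABC hA) (.impE hAB hA)
  | andI => exact .impI (.impI (.andI (.hyp (by simp)) (.hyp (by simp))))
  | @andE1 A B =>
    exact .impI (.andE1 (B := B) (.hyp (by simp)))
  | @andE2 A B =>
    exact .impI (.andE2 (A := A) (.hyp (by simp)))
  | orI1 => exact .impI (.orI1 (.hyp (by simp)))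
  | orI2 => exact .impI (.orI2 (.hyp (by simp)))
  | @orE A B C =>
    refine .impI (.impI (.impI ?_))
    set S := insert (A.or B) (insert (B.imp C) (insert (A.imp C) Γ)) with hS
    have hor : ND S (A.or B) := .hyp (by simp [hS])
    refine .orE hor ?_ ?_
    · have h1 : ND (insert A S) (A.imp C) := .hyp (by simp [hS])
      exact .impE h1 (.hyp (by simp))
    · have h2 : ND (insert B S) (B.imp C) := .hyp (by simp [hS])
      exact .impE h2 (.hyp (by simp))
  | exfalso => exact .impI (.botE (.hyp (by simp)))
  | @k A B =>
    refine .impI (.impI ?_)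
    set S := insert (Formula.box A) (insert (Formula.box (A.imp B)) Γ) with hS
    refine .boxI [A.imp B, A] ?_ ?_
    · intro X hX
      simp only [List.mem_cons, List.not_mem_nil, or_false] at hX
      rcases hX with rfl | rfl
      · exact .hyp (by simp [hS])
      · exact .hyp (by simp [hS])
    · have h1 : ND (S ∪ {x | x ∈ [A.imp B, A]}) (A.imp B) := .hyp (by simp)
      have h2 : ND (S ∪ {x | x ∈ [A.imp B, A]}) A := .hyp (by simp)
      exact .impE h1 h2
  | @coreflection A =>
    refine .impI (.boxI [] (by simp) ?_)
    exact .hyp (Or.inl (by simp))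
  | mp _ _ ih1 ih2 => exact .impE ih1 ih2

/-- **Equivalence of the natural deduction and Hilbert formulations of intuitionistic
belief**: for every set of hypotheses `Γ` and formula `A`, `A` is derivable from `Γ` in
the natural deduction system `IEL⁻` iff it is derivable from `Γ` in the Hilbert system
`𝕀EL⁻`. -/
theorem nd_iff_hilbert :
    ∀ (Γ : Set Formula) (A : Formula), ND Γ A ↔ Hilbert Γ A :=
  fun _ _ => ⟨ND.toHilbert, Hilbert.toND⟩

end IEL
end

section
/- Strong normalization of permutation reduction: the untyped λ^{□→∧∨}-calculus is strongly normalizing with respect to the one-step permutation reduction >_P, i.e. there is no infinite sequence t₀ >_P t₁ >_P t₂ >_P … of λ^{□→∧∨}-terms (the converse of >_P is well-founded). -/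
namespace IEL

/-- de Bruijn lifting of a renaming under `n` extra binders. -/
def liftRen (n : ℕ) (f : ℕ → ℕ) : ℕ → ℕ :=
  fun j => if j < n then j else f (j - n) + n

/-- Terms of the calculus `λ^{□→∧∨}` in de Bruijn representation.
In `box ts s`, the body `s` is under `ts.length` binders: de Bruijn index `j` in `s`
refers to the binding for `ts[ts.length - 1 - j]` (i.e. `x₁` is the outermost binder). -/
inductive Tm : Type where
  | var : ℕ → Tm
  | lam : Tm → Tm
  | app : Tm → Tm → Tm
  | pair : Tm → Tm → Tm
  | proj1 : Tm → Tm
  | proj2 : Tm → Tm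
  | inl : Tm → Tm
  | inr : Tm → Tm
  | case : Tm → Tm → Tm → Tm
  | box : List Tm → Tm → Tm

def Tm.rename (f : ℕ → ℕ) : Tm → Tm
  | .var n => .var (f n)
  | .lam t => .lam (t.rename (liftRen 1 f))
  | .app t s => .app (t.rename f) (s.rename f)
  | .pair t s => .pair (t.rename f) (s.rename f)
  | .proj1 t => .proj1 (t.rename f)
  | .proj2 t => .proj2 (t.rename f)
  | .inl t => .inl (t.rename f)
  | .inr t => .inr (t.rename f)
  | .case t a b => .case (t.rename f) (a.rename (liftRen 1 f)) (b.rename (liftRen 1 f))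
  | .box ts s => .box (ts.attach.map fun x => x.1.rename f) (s.rename (liftRen ts.length f))
termination_by t => sizeOf t
decreasing_by all_goals simp_wf <;> ((try have := List.sizeOf_lt_of_mem x.2); omega)

/-- Compatible (contextual) closure of a base relation `R`. -/
inductive Compat (R : Tm → Tm → Prop) : Tm → Tm → Prop where
  | base {t s} : R t s → Compat R t s
  | lam {t t'} : Compat R t t' → Compat R (.lam t) (.lam t')
  | appL {t t' s} : Compat R t t' → Compat R (.app t s) (.app t' s)
  | appR {t s s'} : Compat R s s' → Compat R (.app t s) (.app t s')
  | pairL {t t' s} : Compat R t t' → Compat R (.pair t s) (.pair t' s)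
  | pairR {t s s'} : Compat R s s' → Compat R (.pair t s) (.pair t s')
  | proj1 {t t'} : Compat R t t' → Compat R (.proj1 t) (.proj1 t')
  | proj2 {t t'} : Compat R t t' → Compat R (.proj2 t) (.proj2 t')
  | inl {t t'} : Compat R t t' → Compat R (.inl t) (.inl t')
  | inr {t t'} : Compat R t t' → Compat R (.inr t) (.inr t')
  | case1 {t t' a b} : Compat R t t' → Compat R (.case t a b) (.case t' a b)
  | case2 {t a a' b} : Compat R a a' → Compat R (.case t a b) (.case t a' b)
  | case3 {t a b b'} : Compat R b b' → Compat R (.case t a b) (.case t a b')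
  | boxArg {t t' l₁ l₂ s} : Compat R t t' →
      Compat R (.box (l₁ ++ t :: l₂) s) (.box (l₁ ++ t' :: l₂) s)
  | boxBody {ts s s'} : Compat R s s' → Compat R (.box ts s) (.box ts s')

/-- Root permutation conversions. -/
inductive PRed : Tm → Tm → Prop where
  | appCase {t a b s} : PRed (.app (.case t a b) s)
      (.case t (.app a (s.rename (· + 1))) (.app b (s.rename (· + 1))))
  | proj1Case {t a b} : PRed (.proj1 (.case t a b)) (.case t (.proj1 a) (.proj1 b))
  | proj2Case {t a b} : PRed (.proj2 (.case t a b)) (.case t (.proj2 a) (.proj2 b))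
  | caseCase {t a b c d} : PRed (.case (.case t a b) c d)
      (.case t (.case a (c.rename (liftRen 1 (· + 1))) (d.rename (liftRen 1 (· + 1))))
               (.case b (c.rename (liftRen 1 (· + 1))) (d.rename (liftRen 1 (· + 1)))))
  | boxCase {l₁ l₂ t a b s} :
      PRed (.box (l₁ ++ (.case t a b) :: l₂) s)
        (.case t
          (.box ((l₁.map (Tm.rename (· + 1))) ++ a :: (l₂.map (Tm.rename (· + 1))))
                (s.rename (liftRen (l₁.length + 1 + l₂.length) (· + 1))))
          (.box ((l₁.map (Tm.rename (· + 1))) ++ b :: (l₂.map (Tm.rename (· + 1))))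
                (s.rename (liftRen (l₁.length + 1 + l₂.length) (· + 1)))))

/-- One-step permutation reduction `>_P`: the compatible closure of the root permutations. -/
def StepP : Tm → Tm → Prop := Compat PRed

/-- Measure for permutation reduction. -/
def mu : Tm → ℕ
  | .var _ => 1
  | .lam t => mu t + 1
  | .app t s => mu t * (mu s + 1)
  | .pair t s => mu t + mu s + 1
  | .proj1 t => 2 * mu t
  | .proj2 t => 2 * mu t
  | .inl t => mu t + 1
  | .inr t => mu t + 1
  | .case t a b => mu t * (mu a + mu b + 1)
  | .box ts s => (mu s + 1) * (ts.attach.map fun x => 2 * mu x.1).prod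
termination_by t => sizeOf t
decreasing_by all_goals simp_wf <;> ((try have := List.sizeOf_lt_of_mem x.2); omega)

lemma mu_box (ts : List Tm) (s : Tm) :
    mu (.box ts s) = (mu s + 1) * (ts.map fun t => 2 * mu t).prod := by
  rw [mu]
  congr 1
  rw [show (fun (x : {x // x ∈ ts}) => 2 * mu x.1) = (fun t => 2 * mu t) ∘ Subtype.val from rfl,
    ← List.map_map]
  simp

lemma rename_box (f : ℕ → ℕ) (ts : List Tm) (s : Tm) :
    (Tm.box ts s).rename f = .box (ts.map (Tm.rename f)) (s.rename (liftRen ts.length f)) := by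
  rw [Tm.rename]
  congr 1
  rw [show (fun (x : {x // x ∈ ts}) => x.1.rename f) = (Tm.rename f) ∘ Subtype.val from rfl,
    ← List.map_map]
  simp


lemma mu_pos (t : Tm) : 0 < mu t := by
  have H : ∀ n (t : Tm), sizeOf t ≤ n → 0 < mu t := by
    intro n
    induction n with
    | zero => intro t h; cases t <;> simp at h
    | succ n ih =>
      intro t h
      cases t with
      | var k => simp [mu]
      | lam t => simp [mu]
      | app t s =>
        simp only [Tm.app.sizeOf_spec] at h
        rw [mu]
        exact Nat.mul_pos (ih t (by omega)) (Nat.succ_pos _)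
      | pair t s => simp [mu]
      | proj1 t =>
        simp only [Tm.proj1.sizeOf_spec] at h
        rw [mu]; have := ih t (by omega); omega
      | proj2 t =>
        simp only [Tm.proj2.sizeOf_spec] at h
        rw [mu]; have := ih t (by omega); omega
      | inl t => simp [mu]
      | inr t => simp [mu]
      | case t a b =>
        simp only [Tm.case.sizeOf_spec] at h
        rw [mu]
        exact Nat.mul_pos (ih t (by omega)) (Nat.succ_pos _)
      | box ts s =>
        simp only [Tm.box.sizeOf_spec] at h
        rw [mu_box]
        refine Nat.mul_pos (Nat.succ_pos _) (List.prod_pos ?_)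
        intro a ha
        simp only [List.mem_map] at ha
        obtain ⟨t, ht, rfl⟩ := ha
        have h1 := List.sizeOf_lt_of_mem ht
        have h2 := ih t (by omega)
        omega
  exact H _ t le_rfl

lemma prodf_pos (l : List Tm) : 0 < (l.map fun t => 2 * mu t).prod := by
  apply List.prod_pos
  intro a ha
  simp only [List.mem_map] at ha
  obtain ⟨t, _, rfl⟩ := ha
  have := mu_pos t
  omega

lemma mu_rename (f : ℕ → ℕ) (t : Tm) : mu (t.rename f) = mu t := by
  have H : ∀ n (t : Tm) (f : ℕ → ℕ), sizeOf t ≤ n → mu (t.rename f) = mu t := by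
    intro n
    induction n with
    | zero => intro t f h; cases t <;> simp at h
    | succ n ih =>
      intro t f h
      cases t with
      | var k => simp [Tm.rename, mu]
      | lam t =>
        simp only [Tm.lam.sizeOf_spec] at h
        rw [Tm.rename]; rw [mu, mu, ih t _ (by omega)]
      | app t s =>
        simp only [Tm.app.sizeOf_spec] at h
        rw [Tm.rename]; rw [mu, mu, ih t _ (by omega), ih s _ (by omega)]
      | pair t s =>
        simp only [Tm.pair.sizeOf_spec] at h
        rw [Tm.rename]; rw [mu, mu, ih t _ (by omega), ih s _ (by omega)]
      | proj1 t =>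
        simp only [Tm.proj1.sizeOf_spec] at h
        rw [Tm.rename]; rw [mu, mu, ih t _ (by omega)]
      | proj2 t =>
        simp only [Tm.proj2.sizeOf_spec] at h
        rw [Tm.rename]; rw [mu, mu, ih t _ (by omega)]
      | inl t =>
        simp only [Tm.inl.sizeOf_spec] at h
        rw [Tm.rename]; rw [mu, mu, ih t _ (by omega)]
      | inr t =>
        simp only [Tm.inr.sizeOf_spec] at h
        rw [Tm.rename]; rw [mu, mu, ih t _ (by omega)]
      | case t a b =>
        simp only [Tm.case.sizeOf_spec] at h
        rw [Tm.rename]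
        rw [mu, mu, ih t _ (by omega), ih a _ (by omega), ih b _ (by omega)]
      | box ts s =>
        simp only [Tm.box.sizeOf_spec] at h
        rw [rename_box, mu_box, mu_box, ih s _ (by omega), List.map_map]
        congr 2
        apply List.map_congr_left
        intro a ha
        have h1 := List.sizeOf_lt_of_mem ha
        simp only [Function.comp_apply]
        rw [ih a _ (by omega)]
  exact H _ t _ le_rfl

lemma mu_case (t a b : Tm) : mu (.case t a b) = mu t * (mu a + mu b + 1) := by rw [mu]

lemma pred_mu {t s : Tm} (h : PRed t s) : mu s < mu t := by
  cases h with
  | @appCase t a b s =>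
    rw [mu, mu, mu, mu, mu, mu_rename]
    have ht := mu_pos t; have hs := mu_pos s
    nlinarith [mu_pos a, mu_pos b]
  | @proj1Case t a b =>
    rw [mu, mu, mu, mu, mu]
    have ht := mu_pos t
    nlinarith
  | @proj2Case t a b =>
    rw [mu, mu, mu, mu, mu]
    have ht := mu_pos t
    nlinarith
  | @caseCase t a b c d =>
    rw [mu, mu, mu, mu, mu, mu_rename, mu_rename]
    have ht := mu_pos t; have hc := mu_pos c; have hd := mu_pos d
    nlinarith
  | @boxCase l1 l2 t a b s =>
    simp only [mu_box, mu_case, mu_rename, List.map_append, List.map_cons,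
      List.prod_append, List.prod_cons, List.map_map, Function.comp_def]
    have ht := mu_pos t
    have h1 := prodf_pos l1
    have h2 := prodf_pos l2
    have hr : (mu s + 1) * ((List.map (fun x => 2 * mu x) l1).prod *
          (2 * (mu t * (mu a + mu b + 1)) * (List.map (fun x => 2 * mu x) l2).prod))
        = mu t * ((mu s + 1) * ((List.map (fun x => 2 * mu x) l1).prod *
            (2 * mu a * (List.map (fun x => 2 * mu x) l2).prod))
          + (mu s + 1) * ((List.map (fun x => 2 * mu x) l1).prod *
            (2 * mu b * (List.map (fun x => 2 * mu x) l2).prod))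
          + 2 * ((mu s + 1) * ((List.map (fun x => 2 * mu x) l1).prod *
            (List.map (fun x => 2 * mu x) l2).prod))) := by ring
    rw [hr]
    have hQ : 0 < (mu s + 1) * ((List.map (fun x => 2 * mu x) l1).prod *
        (List.map (fun x => 2 * mu x) l2).prod) :=
      Nat.mul_pos (Nat.succ_pos _) (Nat.mul_pos h1 h2)
    exact Nat.mul_lt_mul_of_le_of_lt le_rfl (by omega) ht

lemma step_mu {t s : Tm} (h : StepP t s) : mu s < mu t := by
  induction h with
  | base h => exact pred_mu h
  | lam _ ih => rw [mu, mu]; omega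
  | appL _ ih => rw [mu, mu]; exact Nat.mul_lt_mul_of_lt_of_le ih le_rfl (Nat.succ_pos _)
  | @appR t _ _ _ ih =>
    rw [mu, mu]
    exact Nat.mul_lt_mul_of_le_of_lt le_rfl (by omega) (mu_pos t)
  | pairL _ ih => rw [mu, mu]; omega
  | pairR _ ih => rw [mu, mu]; omega
  | proj1 _ ih => rw [mu, mu]; omega
  | proj2 _ ih => rw [mu, mu]; omega
  | inl _ ih => rw [mu, mu]; omega
  | inr _ ih => rw [mu, mu]; omega
  | case1 _ ih => rw [mu, mu]; exact Nat.mul_lt_mul_of_lt_of_le ih le_rfl (Nat.succ_pos _)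
  | @case2 t _ _ _ _ ih =>
    rw [mu, mu]
    exact Nat.mul_lt_mul_of_le_of_lt le_rfl (by omega) (mu_pos t)
  | @case3 t _ _ _ _ ih =>
    rw [mu, mu]
    exact Nat.mul_lt_mul_of_le_of_lt le_rfl (by omega) (mu_pos t)
  | @boxArg u u' l1 l2 s _ ih =>
    rw [mu_box, mu_box, List.map_append, List.map_append, List.prod_append,
      List.prod_append, List.map_cons, List.map_cons, List.prod_cons, List.prod_cons]
    have h1 := prodf_pos l1
    have h2 := prodf_pos l2
    have hr1 : (mu s + 1) * ((List.map (fun t => 2 * mu t) l1).prod *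
          (2 * mu u' * (List.map (fun t => 2 * mu t) l2).prod))
        = (2 * (mu s + 1) * ((List.map (fun t => 2 * mu t) l1).prod *
            (List.map (fun t => 2 * mu t) l2).prod)) * mu u' := by ring
    have hr2 : (mu s + 1) * ((List.map (fun t => 2 * mu t) l1).prod *
          (2 * mu u * (List.map (fun t => 2 * mu t) l2).prod))
        = (2 * (mu s + 1) * ((List.map (fun t => 2 * mu t) l1).prod *
            (List.map (fun t => 2 * mu t) l2).prod)) * mu u := by ring
    rw [hr1, hr2]
    refine Nat.mul_lt_mul_of_le_of_lt le_rfl ih ?_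
    exact Nat.mul_pos (by omega) (Nat.mul_pos h1 h2)
  | @boxBody ts _ _ _ ih =>
    rw [mu_box, mu_box]
    exact Nat.mul_lt_mul_of_lt_of_le (by omega) le_rfl (prodf_pos ts)

/-- **Strong normalization of permutation reduction**: the untyped `λ^{□→∧∨}`-calculus is
strongly normalizing with respect to the one-step permutation reduction `>_P`, i.e. the
converse of `>_P` is well-founded (there is no infinite sequence `t₀ >_P t₁ >_P t₂ >_P ⋯`). -/
theorem strong_normalization_perm : WellFounded (fun s t : Tm => StepP t s) := by
  exact Subrelation.wf (fun {s t} hst => step_mu hst) (InvImage.wf mu Nat.lt_wfRel.wf)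

end IEL
end

section
/- Invariance of the auxiliary measure # under permutation: for all λ^{□→∧∨}-terms t and s, if t >_P s then #t = #s. -/
namespace IEL

/-- The auxiliary measure `#` on terms. -/
def count : Tm → ℕ
  | .var _ => 1
  | .lam _ => 1
  | .app t _ => count t
  | .pair _ _ => 1
  | .proj1 t => count t
  | .proj2 t => count t
  | .inl _ => 1
  | .inr _ => 1
  | .case t a b => 2 * count t * (count a + count b)
  | .box ts s => count s * (ts.attach.map fun x => count x.1).prod
termination_by t => sizeOf t
decreasing_by all_goals simp_wf <;> ((try have := List.sizeOf_lt_of_mem x.2); omega)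

/-- The permutation degree `|·|` on terms. -/
def degree : Tm → ℕ
  | .var _ => 1
  | .lam t => degree t
  | .app t s => degree t + count t * degree s
  | .pair t s => degree t + degree s
  | .proj1 t => degree t + count t
  | .proj2 t => degree t + count t
  | .inl t => degree t
  | .inr t => degree t
  | .case t a b => degree t + count t * (degree a + degree b)
  | .box ts s =>
      degree s * (ts.attach.map fun x => degree x.1).prod
        + (ts.attach.map fun x => count x.1).prod
termination_by t => sizeOf t
decreasing_by all_goals simp_wf <;> ((try have := List.sizeOf_lt_of_mem x.2); omega)

lemma count_box (ts : List Tm) (s : Tm) :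
    count (.box ts s) = count s * (ts.map count).prod := by
  rw [count]
  congr 1
  rw [List.attach_map_val]

lemma count_rename : ∀ n (t : Tm), sizeOf t ≤ n → ∀ f, count (t.rename f) = count t := by
  intro n
  induction n with
  | zero => intro t h; cases t <;> simp at h
  | succ n ih =>
    intro t h f
    cases t with
    | var k => simp [Tm.rename, count]
    | lam t => simp [Tm.rename, count]
    | app t s =>
      simp only [Tm.rename, count]
      exact ih t (by simp at h; omega) f
    | pair t s => simp [Tm.rename, count]
    | proj1 t =>
      simp only [Tm.rename, count]
      exact ih t (by simp at h; omega) f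
    | proj2 t =>
      simp only [Tm.rename, count]
      exact ih t (by simp at h; omega) f
    | inl t => simp [Tm.rename, count]
    | inr t => simp [Tm.rename, count]
    | case t a b =>
      simp only [Tm.rename, count]
      rw [ih t (by simp at h; omega), ih a (by simp at h; omega),
        ih b (by simp at h; omega)]
    | box ts s =>
      rw [rename_box, count_box, count_box, List.map_map]
      have hs : sizeOf s ≤ n := by simp at h; omega
      rw [ih s hs]
      congr 2
      apply List.map_congr_left
      intro x hx
      have hx' : sizeOf x < sizeOf ts := List.sizeOf_lt_of_mem hx
      exact ih x (by simp at h; omega) f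

lemma count_rename' (t : Tm) (f : ℕ → ℕ) : count (t.rename f) = count t :=
  count_rename (sizeOf t) t le_rfl f

lemma count_pred {t s : Tm} (h : PRed t s) : count t = count s := by
  cases h with
  | appCase => simp [count]
  | proj1Case => simp [count]
  | proj2Case => simp [count]
  | caseCase => simp [count, count_rename']; ring
  | boxCase =>
    rename_i l₁ l₂ t a b s
    rw [count_box]
    simp only [count, count_box, List.map_append, List.map_cons, List.map_map,
      List.prod_append, List.prod_cons, count_rename']
    have : ∀ l : List Tm, (l.map (count ∘ Tm.rename (· + 1))).prod = (l.map count).prod := by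
      intro l
      congr 1
      apply List.map_congr_left
      intro x _
      exact count_rename' x _
    rw [this, this]
    ring

/-- **Invariance of the auxiliary measure `#` under permutation**: if `t >_P s` then `#t = #s`. -/
theorem count_invariant_of_perm : ∀ t s : Tm, StepP t s → count t = count s := by
  intro t s h
  induction h with
  | base hb => exact count_pred hb
  | lam _ ih => simp [count]
  | appL _ ih => simp [count, ih]
  | appR _ ih => simp [count]
  | pairL _ ih => simp [count]
  | pairR _ ih => simp [count]
  | proj1 _ ih => simp [count, ih]
  | proj2 _ ih => simp [count, ih]
  | inl _ ih => simp [count]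
  | inr _ ih => simp [count]
  | case1 _ ih => simp [count, ih]
  | case2 _ ih => simp [count, ih]
  | case3 _ ih => simp [count, ih]
  | boxArg _ ih => simp [count_box, ih]
  | boxBody _ ih => simp [count_box, ih]

end IEL
end
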